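/- (({e²} ∘ G₁) ∘ {e²}) ∩ (({e⁴} ∘ G₁) ∘ {e⁴}) = ∅: no word labels both a direct summand of ω(1²) ⊗ ω(g) ⊗ ω(1²) for some g ∈ G₁ and a direct summand of ω(1⁴) ⊗ ω(g') ⊗ ω(1⁴) for some g' ∈ G₁. (Lemma 3.4(3) of the paper.) -/

import Mathlib

/- Combinatorial model of the Lemeux–Tarrago fusion rules for a free wreath
product 𝔾 ≀* S_N⁺. Words over `I` (a type modeling `Irr 𝔾`) label the
irreducible corepresentations. -/

variable {I : Type*}

/-- The conjugate word `x̄ = (x.map bar).reverse`. -/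
def conjW (bar : I → I) (x : List I) : List I := (x.map bar).reverse

/-- `fusW bar fus x y` is the set of words `z` such that `ω(z)` is a direct
summand of `ω(x) ⊗ ω(y)`: there are `u, t, v` with `x = u ++ t`,
`y = t̄ ++ v` and either `z = u ++ v` (concatenation), or `u ≠ []`, `v ≠ []`
and `z = u.dropLast ++ [γ] ++ v.tail` for some `γ ∈ fus u.getLast v.head`
(fusion). -/
def fusW (bar : I → I) (fus : I → I → Set I) (x y : List I) : Set (List I) :=
  {z | ∃ u t v : List I, x = u ++ t ∧ y = conjW bar t ++ v ∧
    (z = u ++ v ∨ ∃ a b : I, u.getLast? = some a ∧ v.head? = some b ∧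
      ∃ γ ∈ fus a b, z = u.dropLast ++ [γ] ++ v.tail)}

/-- `A ∘ B` for sets of words. -/
def fusSet (bar : I → I) (fus : I → I → Set I) (A B : Set (List I)) :
    Set (List I) :=
  {z | ∃ x ∈ A, ∃ y ∈ B, z ∈ fusW bar fus x y}

/-- `E₁`: words starting with `e`, together with the empty word. -/
def E₁ (e : I) : Set (List I) := {x | x = [] ∨ x.head? = some e}

/-- `E₂`: words all of whose letters equal `e`. -/
def E₂ (e : I) : Set (List I) := {x | ∃ k : ℕ, x = List.replicate k e}

/-- `E₃ = E₁ \ E₂`. -/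
def E₃ (e : I) : Set (List I) := E₁ e \ E₂ e

/-- `S`: words containing at least one letter different from `e`. -/
def Sset (e : I) : Set (List I) := {x | x ∉ E₂ e}

/-- `G₁`: nonempty words starting with a letter different from `e`. -/
def G₁ (e : I) : Set (List I) := {x | x ≠ [] ∧ x.head? ≠ some e}

/-- `G₂`: nonempty words starting and ending with letters different from `e`. -/
def G₂ (e : I) : Set (List I) :=
  {x | x ≠ [] ∧ x.head? ≠ some e ∧ x.getLast? ≠ some e}


/-! Count the leading letters `e` of a word. Fusing `e^(k+1)` on the left with a word of `G₁`
gives exactly `k + 1` leading `e`'s (concatenation) or exactly `k` (fusion, since `e ⊗ β = β`).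
Fusing with `e^k` on the right only cancels or fuses letters of an all-`e` suffix lying beyond
the first letter `≠ e`, so it keeps the count. Hence words of the first set have one or two
leading `e`'s, and words of the second set three or four. -/

section Conj

variable {bar : I → I} {e : I}

lemma conjW_conjW (hbar : ∀ a, bar (bar a) = a) (t : List I) :
    conjW bar (conjW bar t) = t := by
  simp [conjW, List.map_reverse, Function.comp_def, hbar]

lemma conjW_replicate (hbare : bar e = e) (n : ℕ) :
    conjW bar (List.replicate n e) = List.replicate n e := by
  simp [conjW, hbare]

lemma eq_replicate_of_conjW_eq_replicate (hbar : ∀ a, bar (bar a) = a) (hbare : bar e = e)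
    {t : List I} {n : ℕ} (h : conjW bar t = List.replicate n e) : t = List.replicate n e := by
  rw [← conjW_conjW hbar t, h, conjW_replicate hbare]

end Conj

section G₁

variable {e : I}

lemma eq_zero_of_replicate_append_mem_G₁ {n : ℕ} {w : List I}
    (h : List.replicate n e ++ w ∈ G₁ e) : n = 0 := by
  cases n with
  | zero => rfl
  | succ n => simp [G₁, List.replicate_succ] at h

lemma mem_G₁_of_append_replicate_mem_G₁ {w : List I} {j : ℕ}
    (h : w ++ List.replicate j e ∈ G₁ e) : w ∈ G₁ e := by
  cases w with
  | nil =>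
    obtain rfl := eq_zero_of_replicate_append_mem_G₁ (w := []) (by simpa using h)
    simp [G₁] at h
  | cons a w => simpa [G₁] using h

lemma append_mem_G₁ {w : List I} (hw : w ∈ G₁ e) (v : List I) : w ++ v ∈ G₁ e := by
  obtain ⟨hw, hwe⟩ := hw
  cases w with
  | nil => exact absurd rfl hw
  | cons a w => simpa [G₁] using hwe

end G₁

def HasLeadingRun (e : I) (m : ℕ) (z : List I) : Prop :=
  ∃ w ∈ G₁ e, z = List.replicate m e ++ w

namespace HasLeadingRun

variable {e : I} {m : ℕ}

lemma eq_of_le {m' : ℕ} {z : List I} (hle : m ≤ m') (h : HasLeadingRun e m z)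
    (h' : HasLeadingRun e m' z) : m = m' := by
  obtain ⟨w, hw, rfl⟩ := h
  obtain ⟨w', -, hz⟩ := h'
  obtain ⟨d, rfl⟩ := Nat.exists_eq_add_of_le hle
  rw [List.replicate_add, List.append_assoc] at hz
  rw [List.append_cancel_left hz] at hw
  rw [eq_zero_of_replicate_append_mem_G₁ hw, Nat.add_zero]

lemma unique {m' : ℕ} {z : List I} (h : HasLeadingRun e m z) (h' : HasLeadingRun e m' z) :
    m = m' :=
  (le_total m m').elim (fun hle => h.eq_of_le hle h') fun hle => (h'.eq_of_le hle h).symm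

lemma append {u : List I} (h : HasLeadingRun e m u) (v : List I) :
    HasLeadingRun e m (u ++ v) := by
  obtain ⟨w, hw, rfl⟩ := h
  exact ⟨w ++ v, append_mem_G₁ hw v, by rw [List.append_assoc]⟩

lemma of_append_replicate {u : List I} {j : ℕ}
    (h : HasLeadingRun e m (u ++ List.replicate j e)) : HasLeadingRun e m u := by
  obtain ⟨w, hw, hx⟩ := h
  rcases List.append_eq_append_iff.mp hx with ⟨as, -, hj⟩ | ⟨bs, rfl, rfl⟩
  · obtain ⟨-, -, hw_rep⟩ := List.append_eq_replicate_iff.mp hj.symm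
    rw [hw_rep, ← List.nil_append (List.replicate _ e)] at hw
    exact absurd rfl (mem_G₁_of_append_replicate_mem_G₁ hw).1
  · exact ⟨bs, mem_G₁_of_append_replicate_mem_G₁ hw, rfl⟩

end HasLeadingRun

section Fusion

variable {bar : I → I} {e : I} {fus : I → I → Set I}

lemma hasLeadingRun_of_mem_fusW_replicate_left (hbare : bar e = e)
    (hfus_left : ∀ β : I, fus e β = {β}) {k : ℕ} {y z : List I} (hy : y ∈ G₁ e)
    (hz : z ∈ fusW bar fus (List.replicate (k + 1) e) y) :
    HasLeadingRun e k z ∨ HasLeadingRun e (k + 1) z := by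
  obtain ⟨u, t, v, hx, rfl, hz⟩ := hz
  obtain ⟨-, -, ht⟩ := List.append_eq_replicate_iff.mp hx.symm
  rw [ht, conjW_replicate hbare] at hy
  obtain rfl : t = [] := List.length_eq_zero_iff.mp (eq_zero_of_replicate_append_mem_G₁ hy)
  rw [List.append_nil] at hx
  subst hx
  rcases hz with rfl | ⟨a, b, ha, hb, γ, hγ, rfl⟩
  · exact Or.inr ⟨v, hy, rfl⟩
  · rw [List.replicate_succ', List.getLast?_concat, Option.some_inj] at ha
    subst ha
    rw [hfus_left, Set.mem_singleton_iff] at hγ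
    subst hγ
    refine Or.inl ⟨v, hy, ?_⟩
    rw [List.replicate_succ', List.dropLast_concat, List.append_assoc, List.singleton_append,
      List.cons_head?_tail hb]

lemma exists_append_of_mem_fusW_replicate_right (hbar : ∀ a, bar (bar a) = a)
    (hbare : bar e = e) (hfus_right : ∀ β : I, fus β e = {β}) {k : ℕ} {x z : List I}
    (hz : z ∈ fusW bar fus x (List.replicate k e)) :
    ∃ u j v, x = u ++ List.replicate j e ∧ z = u ++ v := by
  obtain ⟨u, t, v, rfl, hy, hz⟩ := hz
  obtain ⟨-, ht, hv⟩ := List.append_eq_replicate_iff.mp hy.symm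
  obtain ⟨v', rfl⟩ : ∃ v', z = u ++ v' := by
    rcases hz with rfl | ⟨a, b, ha, hb, γ, hγ, rfl⟩
    · exact ⟨v, rfl⟩
    · have hbe : b = e := List.eq_of_mem_replicate (hv ▸ List.mem_of_mem_head? hb)
      rw [hbe, hfus_right, Set.mem_singleton_iff] at hγ
      subst hγ
      exact ⟨v.tail, by rw [List.dropLast_append_getLast? γ ha]⟩
  exact ⟨u, _, v', by rw [eq_replicate_of_conjW_eq_replicate hbar hbare ht], rfl⟩

lemma hasLeadingRun_of_mem_fusSet_replicate (hbar : ∀ a, bar (bar a) = a) (hbare : bar e = e)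
    (hfus_left : ∀ β : I, fus e β = {β}) (hfus_right : ∀ β : I, fus β e = {β}) {k : ℕ}
    {z : List I}
    (hz : z ∈ fusSet bar fus (fusSet bar fus {List.replicate (k + 1) e} (G₁ e))
      {List.replicate (k + 1) e}) :
    HasLeadingRun e k z ∨ HasLeadingRun e (k + 1) z := by
  obtain ⟨x, ⟨_, rfl, y, hy, hx⟩, _, rfl, hz⟩ := hz
  obtain ⟨u, j, v, rfl, rfl⟩ :=
    exists_append_of_mem_fusW_replicate_right hbar hbare hfus_right hz
  exact (hasLeadingRun_of_mem_fusW_replicate_left hbare hfus_left hy hx).imp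
    (fun h => h.of_append_replicate.append v) fun h => h.of_append_replicate.append v

end Fusion

theorem stmt7 (bar : I → I) (e : I) (fus : I → I → Set I)
    (hbar : ∀ a : I, bar (bar a) = a) (hbare : bar e = e)
    (hfus_left : ∀ β : I, fus e β = {β}) (hfus_right : ∀ β : I, fus β e = {β}) :
    fusSet bar fus (fusSet bar fus {List.replicate 2 e} (G₁ e))
        {List.replicate 2 e} ∩
      fusSet bar fus (fusSet bar fus {List.replicate 4 e} (G₁ e))
        {List.replicate 4 e} = ∅ := by
  refine Set.eq_empty_of_forall_notMem fun z ⟨h2, h4⟩ => ?_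
  rcases hasLeadingRun_of_mem_fusSet_replicate (k := 1) hbar hbare hfus_left hfus_right h2
    with h | h <;>
  rcases hasLeadingRun_of_mem_fusSet_replicate (k := 3) hbar hbare hfus_left hfus_right h4
    with h' | h' <;>
  exact absurd (h.unique h') (by decide)
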